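/- arXiv:2001.01013 — 3 statements merged into one kernel-verified Lean document; each statement's English description precedes it below -/
import Mathlib

section
/- Let N, M be natural numbers and h > 0. For n = 0,…,M−1 let S_n, S_{n+1/2}, S_{n+1}, K_n, K_{n+1/2}, K_{n+1} be real N×N matrices, and let μ^n, ν^n (n = 0,…,M), M^{n,1}, M^{n,2}, N^{n,1}, N^{n,2}, and forcing vectors G_U^{n,1}, G_U^{n,2}, G_V^{n,1}, G_V^{n,2} be vectors in ℝ^N satisfying, for all n = 0,…,M−1: (i) μ^n − μ^{n+1} = M^{n,1} + M^{n,2}; (ii) ν^n − ν^{n+1} = N^{n,1} + N^{n,2}; (iii) M^{n,1} + (h/2)S_n(μ^{n+1} + M^{n,2}) − (h/2)K_{n+1/2}(ν^{n+1} + N^{n,1} + N^{n,2}) = G_U^{n,1}; (iv) M^{n,2} + (h/2)S_{n+1}(μ^{n+1} + M^{n,2}) − (h/2)K_{n+1/2} ν^{n+1} = G_U^{n,2}; (v) N^{n,1} + (h/2)S_{n+1/2}(ν^{n+1} + N^{n,1} + N^{n,2}) + (h/2)K_n(μ^{n+1} + M^{n,2}) = G_V^{n,1}; (vi) N^{n,2}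 + (h/2)S_{n+1/2} ν^{n+1} + (h/2)K_{n+1}(μ^{n+1} + M^{n,2}) = G_V^{n,2}. Define X^n := μ^{n+1} + M^{n,2}, Y^{n,1} := ν^{n+1} + N^{n,1} + N^{n,2}, Y^{n,2} := ν^{n+1}, and slopes κ^{n,1} := S_n X^n − K_{n+1/2} Y^{n,1} − (2/h)G_U^{n,1}, κ^{n,2} := S_{n+1} X^n − K_{n+1/2} Y^{n,2} − (2/h)G_U^{n,2}, ℓ^{n,1} := K_n X^n + S_{n+1/2} Y^{n,1} − (2/h)G_V^{n,1}, ℓ^{n,2} := K_{n+1} X^n + S_{n+1/2} Y^{n,2} − (2/h)G_V^{n,2}. Then for all n = 0,…,M−1: μ^n = μ^{n+1} − (h/2)(κ^{n,1} + κ^{n,2}), ν^n = ν^{n+1} − (h/2)(ℓ^{n,1} + ℓ^{n,2}), X^n = μ^{n+1} − (h/2)κ^{n,2}, and Y^{n,1} = ν^{n+1} − (h/2)(ℓ^{n,1} + ℓ^{n,2}). -/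
open Matrix

/-- Lemma 1 of the paper: the first-order optimality (saddle-point) conditions (i)–(vi) of the
discrete Lagrangian imply the discrete adjoint time-stepping scheme for `μ, ν, X, Y1`. -/
theorem discrete_adjoint_scheme
    (N M : ℕ) (h : ℝ) (hh : 0 < h)
    -- `S n, Sh n, S1 n` denote `S_n, S_{n+1/2}, S_{n+1}`; similarly for `K`.
    (S Sh S1 K Kh K1 : ℕ → Matrix (Fin N) (Fin N) ℝ)
    (μ ν : ℕ → Fin N → ℝ)
    (M1 M2 N1 N2 GU1 GU2 GV1 GV2 : ℕ → Fin N → ℝ)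
    (hi : ∀ n < M, μ n - μ (n + 1) = M1 n + M2 n)
    (hii : ∀ n < M, ν n - ν (n + 1) = N1 n + N2 n)
    (hiii : ∀ n < M, M1 n + (h / 2) • (S n).mulVec (μ (n + 1) + M2 n)
        - (h / 2) • (Kh n).mulVec (ν (n + 1) + N1 n + N2 n) = GU1 n)
    (hiv : ∀ n < M, M2 n + (h / 2) • (S1 n).mulVec (μ (n + 1) + M2 n)
        - (h / 2) • (Kh n).mulVec (ν (n + 1)) = GU2 n)
    (hv : ∀ n < M, N1 n + (h / 2) • (Sh n).mulVec (ν (n + 1) + N1 n + N2 n)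
        + (h / 2) • (K n).mulVec (μ (n + 1) + M2 n) = GV1 n)
    (hvi : ∀ n < M, N2 n + (h / 2) • (Sh n).mulVec (ν (n + 1))
        + (h / 2) • (K1 n).mulVec (μ (n + 1) + M2 n) = GV2 n)
    (X Y1 Y2 κ1 κ2 l1 l2 : ℕ → Fin N → ℝ)
    (hX : ∀ n, X n = μ (n + 1) + M2 n)
    (hY1 : ∀ n, Y1 n = ν (n + 1) + N1 n + N2 n)
    (hY2 : ∀ n, Y2 n = ν (n + 1))
    (hκ1 : ∀ n, κ1 n = (S n).mulVec (X n) - (Kh n).mulVec (Y1 n) - (2 / h) • GU1 n)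
    (hκ2 : ∀ n, κ2 n = (S1 n).mulVec (X n) - (Kh n).mulVec (Y2 n) - (2 / h) • GU2 n)
    (hl1 : ∀ n, l1 n = (K n).mulVec (X n) + (Sh n).mulVec (Y1 n) - (2 / h) • GV1 n)
    (hl2 : ∀ n, l2 n = (K1 n).mulVec (X n) + (Sh n).mulVec (Y2 n) - (2 / h) • GV2 n) :
    ∀ n < M,
      μ n = μ (n + 1) - (h / 2) • (κ1 n + κ2 n) ∧
      ν n = ν (n + 1) - (h / 2) • (l1 n + l2 n) ∧
      X n = μ (n + 1) - (h / 2) • κ2 n ∧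
      Y1 n = ν (n + 1) - (h / 2) • (l1 n + l2 n) := by
  intro n hn
  have hne : h ≠ 0 := ne_of_gt hh
  have e1 : (h / 2) • κ1 n = -(M1 n) := by
    rw [hκ1, hX, hY1, ← hiii n hn]
    match_scalars <;> field_simp <;> ring
  have e2 : (h / 2) • κ2 n = -(M2 n) := by
    rw [hκ2, hX, hY2, ← hiv n hn]
    match_scalars <;> field_simp <;> ring
  have f1 : (h / 2) • l1 n = -(N1 n) := by
    rw [hl1, hX, hY1, ← hv n hn]
    match_scalars <;> field_simp <;> ring
  have f2 : (h / 2) • l2 n = -(N2 n) := by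
    rw [hl2, hX, hY2, ← hvi n hn]
    match_scalars <;> field_simp <;> ring
  have hμ : μ n = μ (n + 1) + (M1 n + M2 n) := by
    have := hi n hn; linear_combination (norm := abel) this
  have hν : ν n = ν (n + 1) + (N1 n + N2 n) := by
    have := hii n hn; linear_combination (norm := abel) this
  refine ⟨?_, ?_, ?_, ?_⟩
  · rw [hμ, smul_add, e1, e2]; abel
  · rw [hν, smul_add, f1, f2]; abel
  · rw [hX, e2]; abel
  · rw [hY1, smul_add, f1, f2]; abel
end

section
/- Let N, M be natural numbers and h > 0, and for n = 0,…,M−1 let S_n, S_{n+1/2}, S_{n+1}, K_n, K_{n+1/2}, K_{n+1} be real N×N matrices. Suppose vectors μ^n, ν^n (n = 0,…,M) and X^n, Y^{n,1}, Y^{n,2} in ℝ^N satisfy the unforced discrete adjoint scheme: μ^n = μ^{n+1} − (h/2)(κ^{n,1} + κ^{n,2}), ν^n = ν^{n+1} − (h/2)(ℓ^{n,1} + ℓ^{n,2}), X^n = μ^{n+1} − (h/2)κ^{n,2}, Y^{n,2} = ν^{n+1}, Y^{n,1} = ν^{n+1} − (h/2)(ℓ^{n,1} + ℓ^{n,2}),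 where κ^{n,1} = S_n X^n − K_{n+1/2} Y^{n,1}, κ^{n,2} = S_{n+1} X^n − K_{n+1/2} Y^{n,2}, ℓ^{n,1} = K_n X^n + S_{n+1/2} Y^{n,1}, ℓ^{n,2} = K_{n+1} X^n + S_{n+1/2} Y^{n,2}. Then the same variables satisfy the forward-form partitioned Runge–Kutta relations: μ^{n+1} = μ^n + (h/2)(κ^{n,1} + κ^{n,2}), ν^{n+1} = ν^n + (h/2)(ℓ^{n,1} + ℓ^{n,2}), X^n = μ^n + (h/2)κ^{n,1}, Y^{n,1} = ν^n, and Y^{n,2} = ν^n + (h/2)(ℓ^{n,1} + ℓ^{n,2}). In particular the scheme is a partitioned Runge–Kutta method with Butcher coefficients a^μ_{11} = a^μ_{21} = 1/2, a^μ_{12} = a^μ_{22} = 0 (implicit midpoint form for μ) and a^ν_{11} = a^ν_{12} = 0, a^ν_{21} = a^ν_{22} = 1/2 (trapezoidal form for ν), with weights b^μ_1 = b^μ_2 = b^ν_1 = b^ν_2 = 1/2. -/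
open Matrix

/-- Corollary 1 of the paper: the unforced discrete adjoint scheme can be rewritten in
forward-form as a partitioned Runge–Kutta method (implicit midpoint rule for `μ`,
trapezoidal rule for `ν`), with weights `b^μ_i = b^ν_i = 1/2` and stage coefficients
`a^μ = [[1/2,0],[1/2,0]]`, `a^ν = [[0,0],[1/2,1/2]]`. -/
theorem unforced_adjoint_scheme_forward_form
    (N M : ℕ) (h : ℝ) (hh : 0 < h)
    -- `S n, Sh n, S1 n` denote `S_n, S_{n+1/2}, S_{n+1}`; similarly for `K`.
    (S Sh S1 K Kh K1 : ℕ → Matrix (Fin N) (Fin N) ℝ)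
    (μ ν X Y1 Y2 κ1 κ2 l1 l2 : ℕ → Fin N → ℝ)
    (hκ1 : ∀ n, κ1 n = (S n).mulVec (X n) - (Kh n).mulVec (Y1 n))
    (hκ2 : ∀ n, κ2 n = (S1 n).mulVec (X n) - (Kh n).mulVec (Y2 n))
    (hl1 : ∀ n, l1 n = (K n).mulVec (X n) + (Sh n).mulVec (Y1 n))
    (hl2 : ∀ n, l2 n = (K1 n).mulVec (X n) + (Sh n).mulVec (Y2 n))
    (hμ : ∀ n < M, μ n = μ (n + 1) - (h / 2) • (κ1 n + κ2 n))
    (hν : ∀ n < M, ν n = ν (n + 1) - (h / 2) • (l1 n + l2 n))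
    (hX : ∀ n < M, X n = μ (n + 1) - (h / 2) • κ2 n)
    (hY2 : ∀ n < M, Y2 n = ν (n + 1))
    (hY1 : ∀ n < M, Y1 n = ν (n + 1) - (h / 2) • (l1 n + l2 n)) :
    ∀ n < M,
      μ (n + 1) = μ n + (h / 2) • (κ1 n + κ2 n) ∧
      ν (n + 1) = ν n + (h / 2) • (l1 n + l2 n) ∧
      X n = μ n + (h / 2) • κ1 n ∧
      Y1 n = ν n ∧
      Y2 n = ν n + (h / 2) • (l1 n + l2 n) := by
  intro n hn
  refine ⟨?_, ?_, ?_, ?_, ?_⟩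
  · rw [hμ n hn]; abel
  · rw [hν n hn]; abel
  · rw [hX n hn, hμ n hn, smul_add]; abel
  · rw [hY1 n hn, hν n hn]
  · rw [hY2 n hn, hν n hn]; abel
end

section
/- Let N, M, E be natural numbers, h > 0, and let S, K : ℝ × ℝ → (real N×N matrices) be matrix-valued functions of time t and a real parameter α, such that for every required time level t_* ∈ {t_n, t_n + h/2, t_{n+1} : n = 0,…,M−1} (t_n = nh), the maps α ↦ S(t_*, α) and α ↦ K(t_*, α) are differentiable at α = α*. For j = 0,…,E−1, fix vectors (independent of α) u_j^n, v_j^n (n = 0,…,M), stage vectors U_j^{n,1}, U_j^{n,2}, V_j^{n,1}, V_j^{n,2} with V_j^{n,1} = V_j^{n,2}, multipliers μ_j^n, ν_j^n, M_j^{n,1}, M_j^{n,2}, N_j^{n,1}, N_j^{n,2} ∈ ℝ^N, and define for each α the six sums T_j^1(α) = Σ_n ⟨u_j^{n+1} − u_j^n − (h/2)(S_n U_j^{n,1} + S_{n+1} U_j^{n,2} − K_n V_j^{n,1} − K_{n+1} V_j^{n,2}), μ_j^{n+1}⟩, T_j^2(α) = Σ_n ⟨v_j^{n+1} − v_j^n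 − (h/2)(K_{n+1/2}(U_j^{n,1} + U_j^{n,2}) + S_{n+1/2}(V_j^{n,1} + V_j^{n,2})), ν_j^{n+1}⟩, T_j^3(α) = Σ_n ⟨U_j^{n,1} − u_j^n, M_j^{n,1}⟩, T_j^4(α) = Σ_n ⟨U_j^{n,2} − u_j^n − (h/2)(S_n U_j^{n,1} + S_{n+1} U_j^{n,2} − K_n V_j^{n,1} − K_{n+1} V_j^{n,2}), M_j^{n,2}⟩, T_j^5(α) = Σ_n ⟨V_j^{n,1} − v_j^n − (h/2)(K_{n+1/2} U_j^{n,1} + S_{n+1/2} V_j^{n,1}), N_j^{n,1}⟩, T_j^6(α) = Σ_n ⟨V_j^{n,2} − v_j^n − (h/2)(K_{n+1/2} U_j^{n,1} + S_{n+1/2} V_j^{n,1}), N_j^{n,2}⟩, where S_n = S(t_n, α), K_{n+1/2} = K(t_n + h/2, α), etc. Set X_j^n := μ_j^{n+1} + M_j^{n,2}, Y_j^{n,1} := ν_j^{n+1} + N_j^{n,1} + N_j^{n,2}, Y_j^{n,2} := ν_j^{n+1}. Then the derivative at α = α* of α ↦ −Σ_{j=0}^{E−1} Σ_{k=1}^{6}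 T_j^k(α) equals (h/2) Σ_{j=0}^{E−1} Σ_{n=0}^{M−1} [ ⟨S'_n U_j^{n,1} + S'_{n+1} U_j^{n,2} − (K'_n + K'_{n+1}) V_j^{n,1}, X_j^n⟩ + ⟨K'_{n+1/2} U_j^{n,1} + S'_{n+1/2} V_j^{n,1}, Y_j^{n,1}⟩ + ⟨K'_{n+1/2} U_j^{n,2} + S'_{n+1/2} V_j^{n,1}, Y_j^{n,2}⟩ ], where primes denote ∂/∂α evaluated at (t_*, α*). -/
/-! Only the matrices `S`, `K` depend on `α`, and they enter every constraint term linearly, so the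
derivative is obtained term by term. Using `V^{n,1} = V^{n,2}` and collecting the derivative terms
by the vectors `S' U`, `K' U`, `S' V`, `K' V` they contain, the multipliers combine into the
adjoint variables `X`, `Y¹`, `Y²`. -/

open Matrix

section MatrixDeriv

variable {m n : Type*} [Fintype n] {x₀ : ℝ}

theorem hasDerivAt_mulVec_of_entries {A : ℝ → Matrix m n ℝ} {A' : Matrix m n ℝ}
    (hA : ∀ i j, HasDerivAt (fun α => A α i j) (A' i j) x₀) (v : n → ℝ) :
    HasDerivAt (fun α => A α *ᵥ v) (A' *ᵥ v) x₀ :=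
  hasDerivAt_pi.2 fun i => HasDerivAt.fun_sum fun j _ => (hA i j).mul_const (v j)

theorem HasDerivAt.dotProduct_const {w : ℝ → n → ℝ} {w' : n → ℝ} (hw : HasDerivAt w w' x₀)
    (y : n → ℝ) : HasDerivAt (fun α => w α ⬝ᵥ y) (w' ⬝ᵥ y) x₀ :=
  HasDerivAt.fun_sum fun i _ => (hasDerivAt_pi.1 hw i).mul_const (y i)

theorem hasDerivAt_sum_residual_dotProduct {ι : Type*} {s : Finset ι} {r : ℝ}
    {c y : ι → n → ℝ} {w : ι → ℝ → n → ℝ} {w' : ι → n → ℝ}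
    (hw : ∀ k ∈ s, HasDerivAt (w k) (w' k) x₀) :
    HasDerivAt (fun α => ∑ k ∈ s, (c k - r • w k α) ⬝ᵥ y k)
      (-(r * ∑ k ∈ s, w' k ⬝ᵥ y k)) x₀ := by
  rw [Finset.mul_sum, ← Finset.sum_neg_distrib]
  refine HasDerivAt.fun_sum fun k hk => ?_
  simpa [smul_dotProduct] using
    (((hw k hk).const_smul r).const_sub (c k)).dotProduct_const (y k)

end MatrixDeriv

theorem multiplier_regrouping {n : Type*} [Fintype n]
    (A₀ A₁ B₀ B₁ Aₘ Bₘ : Matrix n n ℝ) (U₀ U₁ V μ ν M N₀ N₁ : n → ℝ) :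
    (A₀ *ᵥ U₀ + A₁ *ᵥ U₁ - B₀ *ᵥ V - B₁ *ᵥ V) ⬝ᵥ μ
      + (Bₘ *ᵥ (U₀ + U₁) + Aₘ *ᵥ (V + V)) ⬝ᵥ ν
      + (A₀ *ᵥ U₀ + A₁ *ᵥ U₁ - B₀ *ᵥ V - B₁ *ᵥ V) ⬝ᵥ M
      + (Bₘ *ᵥ U₀ + Aₘ *ᵥ V) ⬝ᵥ N₀ + (Bₘ *ᵥ U₀ + Aₘ *ᵥ V) ⬝ᵥ N₁
    = (A₀ *ᵥ U₀ + A₁ *ᵥ U₁ - (B₀ + B₁) *ᵥ V) ⬝ᵥ (μ + M)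
      + (Bₘ *ᵥ U₀ + Aₘ *ᵥ V) ⬝ᵥ (ν + N₀ + N₁) + (Bₘ *ᵥ U₁ + Aₘ *ᵥ V) ⬝ᵥ ν := by
  simp only [add_mulVec, mulVec_add, add_dotProduct, sub_dotProduct, dotProduct_add]
  ring

theorem discrete_gradient_formula_general
    (Nd M E : ℕ) (h : ℝ) (αstar : ℝ)
    (S K S' K' : ℝ → ℝ → Matrix (Fin Nd) (Fin Nd) ℝ)
    (hS : ∀ n < M, ∀ t ∈ ({n * h, n * h + h / 2, (n + 1) * h} : Set ℝ), ∀ i j : Fin Nd,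
      HasDerivAt (fun α => S t α i j) (S' t αstar i j) αstar)
    (hK : ∀ n < M, ∀ t ∈ ({n * h, n * h + h / 2, (n + 1) * h} : Set ℝ), ∀ i j : Fin Nd,
      HasDerivAt (fun α => K t α i j) (K' t αstar i j) αstar)
    (u v : Fin E → ℕ → Fin Nd → ℝ)
    (U V : Fin E → ℕ → Fin 2 → Fin Nd → ℝ)
    (hV : ∀ j n, V j n 0 = V j n 1)
    (μ ν : Fin E → ℕ → Fin Nd → ℝ)
    (Mm Nm : Fin E → ℕ → Fin 2 → Fin Nd → ℝ)
    (X Y1 Y2 : Fin E → ℕ → Fin Nd → ℝ)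
    (hX : ∀ j n, X j n = μ j (n + 1) + Mm j n 1)
    (hY1 : ∀ j n, Y1 j n = ν j (n + 1) + Nm j n 0 + Nm j n 1)
    (hY2 : ∀ j n, Y2 j n = ν j (n + 1))
    (T1 T2 T3 T4 T5 T6 : Fin E → ℝ → ℝ)
    (hT1 : ∀ j α, T1 j α = ∑ n ∈ Finset.range M,
      (u j (n + 1) - u j n - (h / 2) • ((S (n * h) α).mulVec (U j n 0)
        + (S ((n + 1) * h) α).mulVec (U j n 1) - (K (n * h) α).mulVec (V j n 0)
        - (K ((n + 1) * h) α).mulVec (V j n 1))) ⬝ᵥ μ j (n + 1))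
    (hT2 : ∀ j α, T2 j α = ∑ n ∈ Finset.range M,
      (v j (n + 1) - v j n - (h / 2) • ((K (n * h + h / 2) α).mulVec (U j n 0 + U j n 1)
        + (S (n * h + h / 2) α).mulVec (V j n 0 + V j n 1))) ⬝ᵥ ν j (n + 1))
    (hT3 : ∀ j α, T3 j α = ∑ n ∈ Finset.range M,
      (U j n 0 - u j n) ⬝ᵥ Mm j n 0)
    (hT4 : ∀ j α, T4 j α = ∑ n ∈ Finset.range M,
      (U j n 1 - u j n - (h / 2) • ((S (n * h) α).mulVec (U j n 0)
        + (S ((n + 1) * h) α).mulVec (U j n 1) - (K (n * h) α).mulVec (V j n 0)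
        - (K ((n + 1) * h) α).mulVec (V j n 1))) ⬝ᵥ Mm j n 1)
    (hT5 : ∀ j α, T5 j α = ∑ n ∈ Finset.range M,
      (V j n 0 - v j n - (h / 2) • ((K (n * h + h / 2) α).mulVec (U j n 0)
        + (S (n * h + h / 2) α).mulVec (V j n 0))) ⬝ᵥ Nm j n 0)
    (hT6 : ∀ j α, T6 j α = ∑ n ∈ Finset.range M,
      (V j n 1 - v j n - (h / 2) • ((K (n * h + h / 2) α).mulVec (U j n 0)
        + (S (n * h + h / 2) α).mulVec (V j n 0))) ⬝ᵥ Nm j n 1) :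
    HasDerivAt
      (fun α => -∑ j : Fin E, (T1 j α + T2 j α + T3 j α + T4 j α + T5 j α + T6 j α))
      ((h / 2) * ∑ j : Fin E, ∑ n ∈ Finset.range M,
        (((S' (n * h) αstar).mulVec (U j n 0) + (S' ((n + 1) * h) αstar).mulVec (U j n 1)
            - (K' (n * h) αstar + K' ((n + 1) * h) αstar).mulVec (V j n 0)) ⬝ᵥ X j n
          + ((K' (n * h + h / 2) αstar).mulVec (U j n 0)
            + (S' (n * h + h / 2) αstar).mulVec (V j n 0)) ⬝ᵥ Y1 j n
          + ((K' (n * h + h / 2) αstar).mulVec (U j n 1)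
            + (S' (n * h + h / 2) αstar).mulVec (V j n 0)) ⬝ᵥ Y2 j n))
      αstar   := by
  have hTrapezoid : ∀ n ∈ Finset.range M, ∀ a b c d, HasDerivAt
      (fun α => S (n * h) α *ᵥ a + S ((n + 1) * h) α *ᵥ b - K (n * h) α *ᵥ c
        - K ((n + 1) * h) α *ᵥ d)
      (S' (n * h) αstar *ᵥ a + S' ((n + 1) * h) αstar *ᵥ b - K' (n * h) αstar *ᵥ c
        - K' ((n + 1) * h) αstar *ᵥ d) αstar := by
    intro n hn a b c d
    rw [Finset.mem_range] at hn
    exact (((hasDerivAt_mulVec_of_entries (hS n hn _ (by simp)) a).add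
      (hasDerivAt_mulVec_of_entries (hS n hn _ (by simp)) b)).sub
      (hasDerivAt_mulVec_of_entries (hK n hn _ (by simp)) c)).sub
      (hasDerivAt_mulVec_of_entries (hK n hn _ (by simp)) d)
  have hMidpoint : ∀ n ∈ Finset.range M, ∀ a b, HasDerivAt
      (fun α => K (n * h + h / 2) α *ᵥ a + S (n * h + h / 2) α *ᵥ b)
      (K' (n * h + h / 2) αstar *ᵥ a + S' (n * h + h / 2) αstar *ᵥ b) αstar := by
    intro n hn a b
    rw [Finset.mem_range] at hn
    exact (hasDerivAt_mulVec_of_entries (hK n hn _ (by simp)) a).add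
      (hasDerivAt_mulVec_of_entries (hS n hn _ (by simp)) b)
  simp only [hT1, hT2, hT3, hT4, hT5, hT6]
  refine (HasDerivAt.fun_sum fun j _ =>
    (((((hasDerivAt_sum_residual_dotProduct fun n hn => hTrapezoid n hn _ _ _ _).add
      (hasDerivAt_sum_residual_dotProduct fun n hn => hMidpoint n hn _ _)).add
      (hasDerivAt_const _ _)).add
      (hasDerivAt_sum_residual_dotProduct fun n hn => hTrapezoid n hn _ _ _ _)).add
      (hasDerivAt_sum_residual_dotProduct fun n hn => hMidpoint n hn _ _)).add
      (hasDerivAt_sum_residual_dotProduct fun n hn => hMidpoint n hn _ _)).neg.congr_deriv ?_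
  simp only [Finset.mul_sum, ← Finset.sum_neg_distrib, ← Finset.sum_add_distrib, add_zero]
  refine Finset.sum_congr rfl fun j _ => Finset.sum_congr rfl fun n _ => ?_
  rw [hX, hY1, hY2, ← hV, ← multiplier_regrouping]
  ring

/-- Lemma 2 of the paper: the derivative with respect to the control parameter `α` of the
constraint part `-∑_j ∑_k T_j^k` of the discrete Lagrangian equals the adjoint-based gradient
expression. -/
theorem discrete_gradient_formula
    (Nd M E : ℕ) (h : ℝ) (hh : 0 < h) (αstar : ℝ)
    (S K S' K' : ℝ → ℝ → Matrix (Fin Nd) (Fin Nd) ℝ)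
    (hS : ∀ n < M, ∀ t ∈ ({n * h, n * h + h / 2, (n + 1) * h} : Set ℝ), ∀ i j : Fin Nd,
      HasDerivAt (fun α => S t α i j) (S' t αstar i j) αstar)
    (hK : ∀ n < M, ∀ t ∈ ({n * h, n * h + h / 2, (n + 1) * h} : Set ℝ), ∀ i j : Fin Nd,
      HasDerivAt (fun α => K t α i j) (K' t αstar i j) αstar)
    (u v : Fin E → ℕ → Fin Nd → ℝ)
    (U V : Fin E → ℕ → Fin 2 → Fin Nd → ℝ)
    (hV : ∀ j n, V j n 0 = V j n 1)
    (μ ν : Fin E → ℕ → Fin Nd → ℝ)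
    (Mm Nm : Fin E → ℕ → Fin 2 → Fin Nd → ℝ)
    (X Y1 Y2 : Fin E → ℕ → Fin Nd → ℝ)
    (hX : ∀ j n, X j n = μ j (n + 1) + Mm j n 1)
    (hY1 : ∀ j n, Y1 j n = ν j (n + 1) + Nm j n 0 + Nm j n 1)
    (hY2 : ∀ j n, Y2 j n = ν j (n + 1))
    (T1 T2 T3 T4 T5 T6 : Fin E → ℝ → ℝ)
    (hT1 : ∀ j α, T1 j α = ∑ n ∈ Finset.range M,
      (u j (n + 1) - u j n - (h / 2) • ((S (n * h) α).mulVec (U j n 0)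
        + (S ((n + 1) * h) α).mulVec (U j n 1) - (K (n * h) α).mulVec (V j n 0)
        - (K ((n + 1) * h) α).mulVec (V j n 1))) ⬝ᵥ μ j (n + 1))
    (hT2 : ∀ j α, T2 j α = ∑ n ∈ Finset.range M,
      (v j (n + 1) - v j n - (h / 2) • ((K (n * h + h / 2) α).mulVec (U j n 0 + U j n 1)
        + (S (n * h + h / 2) α).mulVec (V j n 0 + V j n 1))) ⬝ᵥ ν j (n + 1))
    (hT3 : ∀ j α, T3 j α = ∑ n ∈ Finset.range M,
      (U j n 0 - u j n) ⬝ᵥ Mm j n 0)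
    (hT4 : ∀ j α, T4 j α = ∑ n ∈ Finset.range M,
      (U j n 1 - u j n - (h / 2) • ((S (n * h) α).mulVec (U j n 0)
        + (S ((n + 1) * h) α).mulVec (U j n 1) - (K (n * h) α).mulVec (V j n 0)
        - (K ((n + 1) * h) α).mulVec (V j n 1))) ⬝ᵥ Mm j n 1)
    (hT5 : ∀ j α, T5 j α = ∑ n ∈ Finset.range M,
      (V j n 0 - v j n - (h / 2) • ((K (n * h + h / 2) α).mulVec (U j n 0)
        + (S (n * h + h / 2) α).mulVec (V j n 0))) ⬝ᵥ Nm j n 0)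
    (hT6 : ∀ j α, T6 j α = ∑ n ∈ Finset.range M,
      (V j n 1 - v j n - (h / 2) • ((K (n * h + h / 2) α).mulVec (U j n 0)
        + (S (n * h + h / 2) α).mulVec (V j n 0))) ⬝ᵥ Nm j n 1) :
    HasDerivAt
      (fun α => -∑ j : Fin E, (T1 j α + T2 j α + T3 j α + T4 j α + T5 j α + T6 j α))
      ((h / 2) * ∑ j : Fin E, ∑ n ∈ Finset.range M,
        (((S' (n * h) αstar).mulVec (U j n 0) + (S' ((n + 1) * h) αstar).mulVec (U j n 1)
            - (K' (n * h) αstar + K' ((n + 1) * h) αstar).mulVec (V j n 0)) ⬝ᵥ X j n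
          + ((K' (n * h + h / 2) αstar).mulVec (U j n 0)
            + (S' (n * h + h / 2) αstar).mulVec (V j n 0)) ⬝ᵥ Y1 j n
          + ((K' (n * h + h / 2) αstar).mulVec (U j n 1)
            + (S' (n * h + h / 2) αstar).mulVec (V j n 0)) ⬝ᵥ Y2 j n))
      αstar :=
  discrete_gradient_formula_general Nd M E h αstar S K S' K' hS hK u v U V hV μ ν Mm Nm X Y1 Y2 hX
    hY1 hY2 T1 T2 T3 T4 T5 T6 hT1 hT2 hT3 hT4 hT5 hT6
end
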